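/- Let (M,d) be a locally compact ultrametric space that is not discrete, and R a nontrivial commutative ring. Then the Egorov algebra G(M,R) does not admit a standard point value characterization: there exists f ∈ G(M,R) with f ≠ 0 but f(x) = 0 in the ring of generalized numbers R̃ := R^ℕ/∼ for every x ∈ M. -/

import Mathlib

/-!
Pick a non-isolated point `x` and points `u n ≠ x` in a compact ball around `x` whose distances
to `x` strictly decrease. Since every triangle in an ultrametric space is isosceles, balls around
the `u n` of radius less than half of `dist (u n) x` are pairwise disjoint; they are clopen, and
local compactness lets us take them compact. The indicators of these balls vanish eventually at
every point, since each point lies in at most one ball, but not uniformly on the compact ball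
around `x`, which contains every `u n`.
-/

open Function Metric Set Filter Topology

theorem IsClopen.isLocallyConstant_indicator {X R : Type*} [TopologicalSpace X] [Zero R]
    {U : Set X} (hU : IsClopen U) (c : R) : IsLocallyConstant (U.indicator fun _ => c) :=
  (LocallyConstant.indicator (LocallyConstant.const X c) hU).isLocallyConstant

theorem eventually_notMem_of_pairwise_disjoint {α : Type*} {s : ℕ → Set α}
    (hs : Pairwise (Disjoint on s)) (y : α) : ∀ᶠ k in atTop, y ∉ s k := by
  rw [← Nat.cofinite_eq_atTop, eventually_cofinite]
  refine Set.Subsingleton.finite fun j hj k hk => ?_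
  by_contra hjk
  exact disjoint_left.1 (hs hjk) (not_not.1 hj) (not_not.1 hk)

theorem exists_seq_dist_strictAnti {M : Type*} [MetricSpace M] (x : M) [(𝓝[≠] x).NeBot]
    {ε : ℝ} (hε : 0 < ε) :
    ∃ u : ℕ → M, (∀ n, u n ≠ x ∧ dist (u n) x < ε) ∧ StrictAnti fun n => dist (u n) x := by
  refine exists_seq_of_forall_finset_exists (fun y => y ≠ x ∧ dist y x < ε)
    (fun a b => dist b x < dist a x) fun s hs => ?_
  have : ∀ᶠ y in 𝓝[≠] x, (y ≠ x ∧ dist y x < ε) ∧ ∀ a ∈ s, dist y x < dist a x :=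
    (eventually_mem_nhdsWithin.and (nhdsWithin_le_nhds (ball_mem_nhds x hε))).and <|
      s.eventually_all.2 fun a ha => nhdsWithin_le_nhds (ball_mem_nhds x (dist_pos.2 (hs a ha).1))
  exact this.exists

theorem IsUltrametricDist.disjoint_ball_of_dist_ne {X : Type*} [PseudoMetricSpace X]
    [IsUltrametricDist X] {x y z : X} {r s : ℝ} (hyz : dist y x ≠ dist z x)
    (hr : r ≤ dist y x / 2) (hs : s ≤ dist z x / 2) : Disjoint (ball y r) (ball z s) := by
  refine disjoint_left.2 fun w hwy hwz => ?_
  rw [mem_ball'] at hwy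
  rw [mem_ball] at hwz
  have h_isosceles : dist y z = max (dist y x) (dist z x) := by
    rw [dist_comm z x]; exact dist_eq_max_of_dist_ne_dist y x z (by rwa [dist_comm x z])
  have h_short : dist y z < max (dist y x) (dist z x) / 2 :=
    (dist_triangle_max y w z).trans_lt <| max_lt
      (by linarith [le_max_left (dist y x) (dist z x)])
      (by linarith [le_max_right (dist y x) (dist z x)])
  linarith [dist_nonneg (x := y) (y := z)]

theorem IsUltrametricDist.exists_isCompact_ball_lt {X : Type*} [PseudoMetricSpace X]
    [IsUltrametricDist X] [WeaklyLocallyCompactSpace X] (x : X) {ε : ℝ} (hε : 0 < ε) :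
    ∃ r, 0 < r ∧ r < ε ∧ IsCompact (ball x r) := by
  have h_compact : ∀ᶠ r in 𝓝 0, IsCompact (ball x r) :=
    (eventually_isCompact_closedBall x).mono fun r hr =>
      hr.of_isClosed_subset (isClosed_ball x r) ball_subset_closedBall
  have : ∀ᶠ r in 𝓝[>] 0, IsCompact (ball x r) ∧ r < ε :=
    eventually_nhdsWithin_of_eventually_nhds (h_compact.and (gt_mem_nhds hε))
  obtain ⟨r, ⟨hrc, hrε⟩, hr⟩ := (this.and self_mem_nhdsWithin).exists
  exact ⟨r, hr, hrε, hrc⟩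

/-- Let `(M,d)` be a locally compact ultrametric space which is not discrete and
`R` a nontrivial commutative ring. Then the Egorov algebra `G(M,R)` does not
admit a standard point value characterization: there is a sequence `f` of
locally constant compactly supported functions which is not negligible (so
`[f] ≠ 0` in `G(M,R)`) but whose value sequence at each standard point `x ∈ M`
is eventually zero (so `[f](x) = 0` in `R̃ = Rℕ/∼`). -/
theorem egorov_no_standard_point_value_characterization
    {M : Type*} [MetricSpace M] [IsUltrametricDist M] [LocallyCompactSpace M]
    (hM : ¬ DiscreteTopology M)
    (R : Type*) [CommRing R] [Nontrivial R] :
    ∃ f : ℕ → M → R,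
      (∀ k, IsLocallyConstant (f k) ∧ HasCompactSupport (f k)) ∧
      (¬ ∀ K : Set M, IsCompact K → ∃ N : ℕ, ∀ k ≥ N, ∀ x ∈ K, f k x = 0) ∧
      (∀ x : M, ∃ N : ℕ, ∀ k ≥ N, f k x = 0) := by
  obtain ⟨x, hx⟩ : ∃ x : M, (𝓝[≠] x).NeBot := by
    simpa [discreteTopology_iff_nhds_ne, neBot_iff] using hM
  obtain ⟨r₀, hr₀, hK⟩ := exists_isCompact_closedBall x
  obtain ⟨u, hu, hu_anti⟩ := exists_seq_dist_strictAnti x hr₀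
  choose r hr hr_lt hr_compact using fun k =>
    IsUltrametricDist.exists_isCompact_ball_lt (u k) (half_pos (dist_pos.2 (hu k).1))
  have h_disjoint : Pairwise (Disjoint on fun k => ball (u k) (r k)) := fun j k hjk =>
    IsUltrametricDist.disjoint_ball_of_dist_ne (hu_anti.injective.ne hjk) (hr_lt j).le (hr_lt k).le
  refine ⟨fun k => (ball (u k) (r k)).indicator fun _ => 1, fun k => ⟨?_, ?_⟩, ?_, fun y => ?_⟩
  · exact (IsUltrametricDist.isClopen_ball _ _).isLocallyConstant_indicator 1
  · exact HasCompactSupport.intro (hr_compact k) fun y hy => indicator_of_notMem hy _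
  · intro h_negligible
    obtain ⟨N, hN⟩ := h_negligible _ hK
    have h_one := hN N le_rfl (u N) (mem_closedBall.2 (hu N).2.le)
    simp [indicator_of_mem (mem_ball_self (hr N))] at h_one
  · exact eventually_atTop.1 <| (eventually_notMem_of_pairwise_disjoint h_disjoint y).mono
      fun k hk => indicator_of_notMem hk _
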